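/- Let A = V + XY* ∈ ℂ^{n×n} with V ∈ ℂ^{n×n} unitary and X, Y ∈ ℂ^{n×k} with Y*Y = I_k (Y has orthonormal columns). Set B = VY and define the (n+k)×(n+k) matrices V̂ = [[V − V Y Y*, B],[Y*, 0_{k×k}]], X̂ = [X + B; −I_k] ∈ ℂ^{(n+k)×k}, and Ŷ = [Y; 0_{k×k}] ∈ ℂ^{(n+k)×k}. Then V̂ is unitary and Â := V̂ + X̂ Ŷ* = [[A, B],[0_{k×n}, 0_{k×k}]]; in particular the last k rows of Â are zero and its leading n×n principal submatrix is A. -/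

import Mathlib

/-!
`V̂` factors as `diag(V, 1) * [[1 - YYᴴ, Y], [Yᴴ, 0]]`, and since `YᴴY = 1` the second factor is a
Hermitian involution, hence unitary. The identity for `V̂ + X̂Ŷᴴ` is plain block multiplication.
-/

open Matrix

namespace Matrix

variable {m n k α : Type*}

theorem fromBlocks_zero_zero_mem_unitaryGroup [Fintype m] [DecidableEq m] [Fintype n]
    [DecidableEq n] [CommRing α] [StarRing α] {U : Matrix m m α} {W : Matrix n n α}
    (hU : U ∈ unitaryGroup m α) (hW : W ∈ unitaryGroup n α) :
    fromBlocks U 0 0 W ∈ unitaryGroup (m ⊕ n) α := by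
  rw [mem_unitaryGroup_iff', star_eq_conjTranspose] at hU hW ⊢
  simp [fromBlocks_conjTranspose, fromBlocks_multiply, hU, hW]

theorem IsHermitian.mem_unitaryGroup_of_mul_self_eq_one [Fintype n] [DecidableEq n]
    [CommRing α] [StarRing α] {W : Matrix n n α} (hW : W.IsHermitian) (h : W * W = 1) :
    W ∈ unitaryGroup n α :=
  mem_unitaryGroup_iff'.mpr (by rwa [star_eq_conjTranspose, hW.eq])

theorem fromBlocks_one_sub_mul_conjTranspose_mem_unitaryGroup [Fintype m] [DecidableEq m]
    [Fintype k] [DecidableEq k] [CommRing α] [StarRing α] {Y : Matrix m k α}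
    (hY : Yᴴ * Y = 1) :
    fromBlocks (1 - Y * Yᴴ) Y Yᴴ 0 ∈ unitaryGroup (m ⊕ k) α := by
  have hPY : (1 - Y * Yᴴ) * Y = 0 := by
    rw [Matrix.sub_mul, Matrix.one_mul, Matrix.mul_assoc, hY, Matrix.mul_one, sub_self]
  have hYP : Yᴴ * (1 - Y * Yᴴ) = 0 := by
    rw [Matrix.mul_sub, Matrix.mul_one, ← Matrix.mul_assoc, hY, Matrix.one_mul, sub_self]
  have hPP : (1 - Y * Yᴴ) * (1 - Y * Yᴴ) = 1 - Y * Yᴴ := by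
    rw [Matrix.mul_sub (1 - Y * Yᴴ), ← Matrix.mul_assoc, hPY, Matrix.zero_mul, Matrix.mul_one,
      sub_zero]
  refine IsHermitian.mem_unitaryGroup_of_mul_self_eq_one
    (.fromBlocks (by simp [IsHermitian, Matrix.conjTranspose_sub]) rfl (by simp [IsHermitian])) ?_
  rw [fromBlocks_multiply, ← fromBlocks_one]
  simp [hPY, hYP, hPP, hY]

theorem fromBlocks_add_fromRows_mul_conjTranspose_fromRows [Fintype m] [Fintype k] [DecidableEq k]
    [Ring α] [StarRing α] (V : Matrix m m α) (X Y : Matrix m k α) :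
    fromBlocks (V - V * Y * Yᴴ) (V * Y) Yᴴ (0 : Matrix k k α) +
        fromRows (X + V * Y) (-1 : Matrix k k α) * (fromRows Y (0 : Matrix k k α))ᴴ =
      fromBlocks (V + X * Yᴴ) (V * Y) 0 0 := by
  rw [conjTranspose_fromRows_eq_fromCols_conjTranspose, fromRows_mul_fromCols, fromBlocks_add]
  congr 1
  · rw [Matrix.add_mul, Matrix.mul_assoc]; abel
  all_goals simp

end Matrix

theorem embedding_unitary_plus_rank_k {n k : ℕ}
    (A V : Matrix (Fin n) (Fin n) ℂ) (X Y : Matrix (Fin n) (Fin k) ℂ)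
    (hV : V ∈ Matrix.unitaryGroup (Fin n) ℂ)
    (hY : Yᴴ * Y = 1)
    (hA : A = V + X * Yᴴ) :
    Matrix.fromBlocks (V - V * Y * Yᴴ) (V * Y) Yᴴ (0 : Matrix (Fin k) (Fin k) ℂ) ∈
        Matrix.unitaryGroup (Fin n ⊕ Fin k) ℂ ∧
      Matrix.fromBlocks (V - V * Y * Yᴴ) (V * Y) Yᴴ (0 : Matrix (Fin k) (Fin k) ℂ) +
          Matrix.fromRows (X + V * Y) (-1 : Matrix (Fin k) (Fin k) ℂ) *
            (Matrix.fromRows Y (0 : Matrix (Fin k) (Fin k) ℂ))ᴴ =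
        Matrix.fromBlocks A (V * Y) (0 : Matrix (Fin k) (Fin n) ℂ)
          (0 : Matrix (Fin k) (Fin k) ℂ) := by
  refine ⟨?_, hA ▸ fromBlocks_add_fromRows_mul_conjTranspose_fromRows V X Y⟩
  have hfactor : fromBlocks (V - V * Y * Yᴴ) (V * Y) Yᴴ (0 : Matrix (Fin k) (Fin k) ℂ) =
      fromBlocks V 0 0 1 * fromBlocks (1 - Y * Yᴴ) Y Yᴴ 0 := by
    simp [fromBlocks_multiply, Matrix.mul_sub, Matrix.mul_assoc]
  rw [hfactor]
  exact Submonoid.mul_mem _ (fromBlocks_zero_zero_mem_unitaryGroup hV (one_mem _))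
    (fromBlocks_one_sub_mul_conjTranspose_mem_unitaryGroup hY)
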